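/- arXiv:math/0406414 — 5 statements merged into one kernel-verified Lean document; each statement's English description precedes it below -/
import Mathlib

section
/- Let φ be an exponential map on an integral domain A over a field k. If a, b ∈ A are such that the product ab lies in A^φ and ab ≠ 0, then both a and b lie in A^φ; that is, A^φ is factorially closed in A. -/
open Polynomial

/-- An exponential map on a `k`-algebra `A`: a `k`-algebra homomorphism `φ : A → A[U]`
such that evaluating at `U = 0` is the identity and `φ_S φ_U = φ_{S+U}`. -/
def IsExpMap {k A : Type*} [CommSemiring k] [CommSemiring A] [Algebra k A]
    (φ : A →ₐ[k] A[X]) : Prop :=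
  (∀ a : A, (φ a).eval 0 = a) ∧
  (∀ a : A,
    eval₂ ((mapRingHom (C : A →+* A[X])).comp (φ : A →+* A[X])) (C X) (φ a)
      = eval₂ ((C : A[X] →+* A[X][X]).comp (C : A →+* A[X])) (X + C X) (φ a))

/-- The ring of `φ`-invariants `A^φ = {a : A | φ a = a}`. -/
noncomputable def expInv {k A : Type*} [CommSemiring k] [CommSemiring A] [Algebra k A]
    (φ : A →ₐ[k] A[X]) : Subalgebra k A :=
  AlgHom.equalizer φ (IsScalarTower.toAlgHom k A A[X])

/-- The AK invariant: the intersection of the rings of invariants of all exponential maps. -/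
noncomputable def AK (k A : Type*) [CommSemiring k] [CommSemiring A] [Algebra k A] : Subalgebra k A :=
  ⨅ φ ∈ {ψ : A →ₐ[k] A[X] | IsExpMap ψ}, expInv φ

theorem mem_expInv_iff {k A : Type*} [CommSemiring k] [CommSemiring A] [Algebra k A]
    {φ : A →ₐ[k] A[X]} {a : A} : a ∈ expInv φ ↔ φ a = C a :=
  Iff.rfl

theorem mem_expInv_of_natDegree_eq_zero {k A : Type*} [CommSemiring k] [CommSemiring A]
    [Algebra k A] {φ : A →ₐ[k] A[X]} {a : A} (h0 : (φ a).eval 0 = a)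
    (hdeg : (φ a).natDegree = 0) : a ∈ expInv φ := by
  rw [mem_expInv_iff, eq_C_of_natDegree_eq_zero hdeg, coeff_zero_eq_eval_zero, h0]

theorem Polynomial.natDegree_eq_zero_of_mul_eq_C {R : Type*} [Semiring R] [NoZeroDivisors R]
    {p q : R[X]} {c : R} (h : p * q = C c) (hc : c ≠ 0) :
    p.natDegree = 0 ∧ q.natDegree = 0 := by
  have hpq : p * q ≠ 0 := by rwa [h, Ne, C_eq_zero]
  have hsum := natDegree_mul (left_ne_zero_of_mul hpq) (right_ne_zero_of_mul hpq)
  rw [h, natDegree_C] at hsum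
  omega

/-- The ring of invariants of an exponential map on a domain is
factorially closed. -/
theorem statement2 {k A : Type*} [Field k] [CommRing A] [IsDomain A] [Algebra k A]
    (φ : A →ₐ[k] A[X]) (hφ : IsExpMap φ)
    (a b : A) (hab : a * b ∈ expInv φ) (hab0 : a * b ≠ 0) :
    a ∈ expInv φ ∧ b ∈ expInv φ := by
  have hmul : φ a * φ b = C (a * b) := by rw [← map_mul]; exact hab
  obtain ⟨ha, hb⟩ := natDegree_eq_zero_of_mul_eq_C hmul hab0
  exact ⟨mem_expInv_of_natDegree_eq_zero (hφ.1 a) ha,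
    mem_expInv_of_natDegree_eq_zero (hφ.1 b) hb⟩
end

section
/- Let φ be an exponential map on an integral domain A over a field k, and for i ≥ 0 let D^i(a) be the coefficient of U^i in φ(a). Then for every a ∈ A and every natural number i, deg_φ(D^i(a)) ≤ deg_φ(a) − i. In particular, if a ∈ A is nonzero and n = deg_φ(a), then D^n(a) ∈ A^φ. -/
/-!
Comparing the coefficients of `S^j U^i` in `φ_S φ_U a = φ_{S+U} a` gives
`D^j (D^i a) = (i+j choose j) D^{i+j} a`. So `D^j (D^i a) ≠ 0` forces `D^{i+j} a ≠ 0`, that is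
`i + j ≤ deg_φ a`. For `i = deg_φ a` every `D^j (D^i a)` with `j > 0` vanishes, so `φ (D^i a)` is
constant, and its constant term is `D^i a` because `φ b` evaluates to `b` at `U = 0`.
-/

open Polynomial

theorem coeff_coeff_eval₂_mapRingHom_C {A : Type*} [CommSemiring A] (f : A →+* A[X]) (p : A[X])
    (i j : ℕ) :
    ((eval₂ ((mapRingHom C).comp f) (C X) p).coeff j).coeff i = (f (p.coeff i)).coeff j := by
  simp only [eval₂_eq_sum, Polynomial.sum, finsetSum_coeff, ← C_pow, coeff_mul_C, RingHom.coe_comp,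
    Function.comp_apply, coe_mapRingHom, coeff_map, coeff_C_mul, coeff_X_pow, mul_ite, mul_one,
    mul_zero]
  rw [Finset.sum_ite_eq]
  split_ifs with hi
  · rfl
  · rw [notMem_support_iff.mp hi, map_zero, coeff_zero]

theorem coeff_coeff_eval₂_X_add_C_X {A : Type*} [CommSemiring A] (p : A[X]) (i j : ℕ) :
    ((eval₂ (C.comp C) (X + C X) p).coeff j).coeff i = (i + j).choose j * p.coeff (i + j) := by
  simp only [eval₂_eq_sum, Polynomial.sum, finsetSum_coeff, RingHom.coe_comp, Function.comp_apply,
    coeff_C_mul, coeff_X_add_C_pow, ← C_eq_natCast, coeff_mul_C, coeff_X_pow]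
  rw [Finset.sum_eq_single (i + j)]
  · simp [mul_comm]
  · intro n _ hn
    rcases Nat.lt_or_ge n j with hnj | hnj
    · simp [Nat.choose_eq_zero_of_lt hnj]
    · simp [show i ≠ n - j by omega]
  · intro hi
    simp [notMem_support_iff.mp hi]

namespace IsExpMap

variable {k A : Type*} [CommSemiring k] [CommSemiring A] [Algebra k A] {φ : A →ₐ[k] A[X]}

theorem coeff_map_coeff (hφ : IsExpMap φ) (a : A) (i j : ℕ) :
    (φ ((φ a).coeff i)).coeff j = (i + j).choose j * (φ a).coeff (i + j) := by
  simpa only [coeff_coeff_eval₂_mapRingHom_C, coeff_coeff_eval₂_X_add_C_X,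
    AlgHom.coe_toRingHom] using congr((($(hφ.2 a)).coeff j).coeff i)

theorem degree_map_coeff_add_le (hφ : IsExpMap φ) (a : A) (i : ℕ) :
    (φ ((φ a).coeff i)).degree + i ≤ (φ a).degree := by
  by_cases hq : φ ((φ a).coeff i) = 0
  · simp [hq]
  rw [degree_eq_natDegree hq, ← Nat.cast_add, add_comm]
  apply le_degree_of_ne_zero
  have hlead : (φ ((φ a).coeff i)).leadingCoeff ≠ 0 := mt leadingCoeff_eq_zero.mp hq
  rw [leadingCoeff, hφ.coeff_map_coeff] at hlead
  exact right_ne_zero_of_mul hlead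

theorem leadingCoeff_mem_expInv (hφ : IsExpMap φ) (a : A) : (φ a).leadingCoeff ∈ expInv φ := by
  have hconst : (φ (φ a).leadingCoeff).degree ≤ 0 := by
    rw [degree_le_iff_coeff_zero]
    intro m hm
    rw [leadingCoeff, hφ.coeff_map_coeff,
      coeff_eq_zero_of_natDegree_lt (by norm_cast at hm; omega), mul_zero]
  change φ _ = C _
  rw [eq_C_of_degree_le_zero hconst, coeff_zero_eq_eval_zero, hφ.1]

end IsExpMap

theorem statement4_general {k A : Type*} [Field k] [CommRing A] [Algebra k A]
    (φ : A →ₐ[k] A[X]) (hφ : IsExpMap φ) :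
    (∀ (a : A) (i : ℕ), (φ ((φ a).coeff i)).degree + (i : WithBot ℕ) ≤ (φ a).degree) ∧
    (∀ a : A, a ≠ 0 → (φ a).coeff ((φ a).natDegree) ∈ expInv φ) :=
  ⟨hφ.degree_map_coeff_add_le, fun a _ => hφ.leadingCoeff_mem_expInv a⟩

/-- For an exponential map `φ` on a domain `A`, writing `D^i(a)` for the
coefficient of `U^i` in `φ(a)` and `deg_φ(a) = deg_U(φ(a))`, one has
`deg_φ(D^i(a)) ≤ deg_φ(a) - i` (stated additively, with degrees in `ℕ∞`);
in particular if `a ≠ 0` and `n = deg_φ(a)` then `D^n(a) ∈ A^φ`. -/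
theorem statement4 {k A : Type*} [Field k] [CommRing A] [IsDomain A] [Algebra k A]
    (φ : A →ₐ[k] A[X]) (hφ : IsExpMap φ) :
    (∀ (a : A) (i : ℕ), (φ ((φ a).coeff i)).degree + (i : WithBot ℕ) ≤ (φ a).degree) ∧
    (∀ a : A, a ≠ 0 → (φ a).coeff ((φ a).natDegree) ∈ expInv φ) :=
  statement4_general φ hφ
end

section
/- Let φ be an exponential map on an integral domain A over a field k, and let B be the localization of A at the multiplicative set A^φ \ {0}, an algebra over the field Frac(A^φ). Then φ extends to an exponential map on B (a Frac(A^φ)-algebra homomorphism B → B[U] satisfying the exponential map axioms) whose ring of invariants is exactly Frac(A^φ). -/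
open Polynomial

/-- The multiplicative set `A^φ \ {0}` of nonzero `φ`-invariants. -/
noncomputable def expInvNonzero {k A : Type*} [Field k] [CommRing A] [IsDomain A]
    [Algebra k A] (φ : A →ₐ[k] A[X]) : Submonoid A where
  carrier := {a | a ∈ expInv φ ∧ a ≠ 0}
  one_mem' := ⟨one_mem _, one_ne_zero⟩
  mul_mem' := fun ha hb => ⟨mul_mem ha.1 hb.1, mul_ne_zero ha.2 hb.2⟩

/-- Let `φ` be an exponential map on a domain `A` over `k`, and let `B` be
the localization of `A` at `A^φ \ {0}`. Then `φ` extends to an exponential map on `B`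
(a ring homomorphism `B → B[U]` satisfying the exponential axioms) whose ring of
invariants is exactly `Frac(A^φ)`, the set of quotients of elements of `A^φ`. -/
theorem statement13 {k A : Type*} [Field k] [CommRing A] [IsDomain A] [Algebra k A]
    (φ : A →ₐ[k] A[X]) (hφ : IsExpMap φ) :
    ∃ ψ : Localization (expInvNonzero φ) →+* Polynomial (Localization (expInvNonzero φ)),
      (∀ a : A, ψ (algebraMap A (Localization (expInvNonzero φ)) a)
          = (φ a).map (algebraMap A (Localization (expInvNonzero φ)))) ∧
      (∀ b : Localization (expInvNonzero φ), (ψ b).eval 0 = b) ∧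
      (∀ b : Localization (expInvNonzero φ),
        eval₂ ((mapRingHom (C : Localization (expInvNonzero φ) →+*
            Polynomial (Localization (expInvNonzero φ)))).comp ψ) (C X) (ψ b)
          = eval₂ ((C : Polynomial (Localization (expInvNonzero φ)) →+*
              Polynomial (Polynomial (Localization (expInvNonzero φ)))).comp
              (C : Localization (expInvNonzero φ) →+*
                Polynomial (Localization (expInvNonzero φ)))) (X + C X) (ψ b)) ∧
      (∀ b : Localization (expInvNonzero φ), ψ b = C b ↔
        ∃ a ∈ expInv φ, ∃ s ∈ expInv φ, s ≠ 0 ∧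
          b * algebraMap A (Localization (expInvNonzero φ)) s
            = algebraMap A (Localization (expInvNonzero φ)) a) := by
  classical
  set M := expInvNonzero φ with hM
  set B := Localization M with hB
  let f : A →+* B := algebraMap A B
  have hCmem : ∀ s ∈ M, φ s = C s := by
    intro s hs
    have : φ s = (IsScalarTower.toAlgHom k A A[X]) s := hs.1
    simpa [algebraMap_eq] using this
  have hunit : ∀ s : M, IsUnit (((mapRingHom f).comp (φ : A →+* A[X])) s) := by
    rintro ⟨s, hs⟩
    have : ((mapRingHom f).comp (φ : A →+* A[X])) s = C (f s) := by
      simp [RingHom.comp_apply, hCmem s hs]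
    rw [this]
    exact (IsLocalization.map_units B (⟨s, hs⟩ : M)).map (C : B →+* B[X])
  set ψ : B →+* B[X] := IsLocalization.lift hunit with hψ
  have hψa : ∀ a : A, ψ (f a) = (φ a).map f := by
    intro a
    simpa using IsLocalization.lift_eq hunit a
  have hfinj : Function.Injective f := by
    apply IsLocalization.injective B (M := M)
    intro s hs
    exact mem_nonZeroDivisors_of_ne_zero hs.2
  have hψs : ∀ s ∈ M, ψ (f s) = C (f s) := by
    intro s hs
    rw [hψa, hCmem s hs, map_C]
  refine ⟨ψ, hψa, ?_, ?_, ?_⟩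
  · -- eval at 0
    have key : (evalRingHom (0 : B)).comp ψ = RingHom.id B := by
      apply IsLocalization.ringHom_ext M
      ext a
      simp only [RingHom.comp_apply, RingHom.id_apply, coe_evalRingHom]
      rw [hψa a, eval_map, eval₂_at_zero, coeff_zero_eq_eval_zero, hφ.1 a]
    intro b
    simpa using RingHom.congr_fun key b
  · -- coassociativity
    have hcomp : (C : B →+* B[X]).comp f = (mapRingHom f).comp (C : A →+* A[X]) :=
      RingHom.ext fun a => by simp [coe_mapRingHom, map_C]
    have e1 : ((mapRingHom (C : B →+* B[X])).comp ψ).comp f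
        = (mapRingHom (mapRingHom f)).comp
            ((mapRingHom (C : A →+* A[X])).comp (φ : A →+* A[X])) := by
      refine RingHom.ext fun a => ?_
      simp only [RingHom.comp_apply, coe_mapRingHom]
      rw [hψa, map_map, map_map, hcomp]
      rfl
    have e2 : (((C : B[X] →+* B[X][X]).comp (C : B →+* B[X]))).comp f
        = (mapRingHom (mapRingHom f)).comp
            ((C : A[X] →+* A[X][X]).comp (C : A →+* A[X])) :=
      RingHom.ext fun a => by simp [coe_mapRingHom, map_C]
    have hCX : (C X : B[X][X]) = mapRingHom (mapRingHom f) (C X) := by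
      simp [coe_mapRingHom, map_C, map_X]
    have hXCX : (X + C X : B[X][X]) = mapRingHom (mapRingHom f) (X + C X) := by
      simp [coe_mapRingHom, map_C, map_X]
    have key : (eval₂RingHom (R := B) (S := B[X][X]) ((mapRingHom (C : B →+* B[X])).comp ψ) (C X)).comp ψ
        = (eval₂RingHom (R := B) (S := B[X][X]) ((C : B[X] →+* B[X][X]).comp (C : B →+* B[X])) (X + C X)).comp ψ := by
      apply IsLocalization.ringHom_ext M
      refine RingHom.ext fun a => ?_
      simp only [RingHom.comp_apply, coe_eval₂RingHom]
      rw [hψa a, eval₂_map, eval₂_map, e1, e2, hXCX, hCX, ← hom_eval₂, ← hom_eval₂, hφ.2 a]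
    intro b
    simpa using RingHom.congr_fun key b
  · -- invariants
    intro b
    constructor
    · intro hb
      obtain ⟨⟨a, s⟩, hbs⟩ := IsLocalization.surj M b
      have hsM : (s : A) ∈ M := s.2
      have h1 : ψ (f a) = C (f a) := by
        rw [← hbs, map_mul, hb, hψs s hsM, ← C_mul]
      have h2 : (φ a).map f = (C a : A[X]).map f := by
        rw [← hψa, h1, map_C]
      have ha : φ a = C a := map_injective f hfinj h2
      refine ⟨a, ?_, s, hsM.1, hsM.2, hbs⟩
      show φ a = (IsScalarTower.toAlgHom k A A[X]) a
      simpa [algebraMap_eq] using ha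
    · rintro ⟨a, ha, s, hs, hs0, hbs⟩
      have hsM : s ∈ M := ⟨hs, hs0⟩
      have haI : φ a = C a := by
        have : φ a = (IsScalarTower.toAlgHom k A A[X]) a := ha
        simpa [algebraMap_eq] using this
      have hu : IsUnit (C (f s) : B[X]) :=
        (IsLocalization.map_units B (⟨s, hsM⟩ : M)).map (C : B →+* B[X])
      apply hu.mul_right_cancel
      calc ψ b * C (f s) = ψ b * ψ (f s) := by rw [hψs s hsM]
        _ = ψ (b * f s) := by rw [map_mul]
        _ = ψ (f a) := by rw [hbs]
        _ = C (f a) := by rw [hψa, haI, map_C]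
        _ = C (b * f s) := by rw [hbs]
        _ = C b * C (f s) := by rw [C_mul]
end

section
/- For any field k and any natural number n, the AK invariant of the polynomial ring k[X₁,…,Xₙ] in n variables over k equals k (the constants). -/
open Polynomial

section Aux

variable {k : Type*} [Field k] {n : ℕ}

local notation "A" => MvPolynomial (Fin n) k

/-- The exponential map translating the `i`-th variable: `Xᵢ ↦ Xᵢ + U`, `Xⱼ ↦ Xⱼ` for `j ≠ i`. -/
noncomputable def expShift (k : Type*) [Field k] {n : ℕ} (i : Fin n) :
    MvPolynomial (Fin n) k →ₐ[k] (MvPolynomial (Fin n) k)[X] :=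
  MvPolynomial.aeval (fun j =>
    Polynomial.C (MvPolynomial.X j) + if j = i then Polynomial.X else 0)

/-- The substitution `Xᵢ ↦ 0`. -/
noncomputable def killVar (k : Type*) [Field k] {n : ℕ} (i : Fin n) :
    MvPolynomial (Fin n) k →ₐ[k] MvPolynomial (Fin n) k :=
  MvPolynomial.aeval (fun j => if j = i then 0 else MvPolynomial.X j)

theorem isExpMap_expShift (i : Fin n) : IsExpMap (expShift k i) := by
  constructor
  · intro a
    have h : (Polynomial.evalRingHom (0 : A)).comp ((expShift k i) : A →+* A[X])
        = RingHom.id A := by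
      apply MvPolynomial.ringHom_ext
      · intro r
        simp [expShift, MvPolynomial.algebraMap_eq]
      · intro j
        by_cases hj : j = i <;> simp [expShift, hj]
    exact RingHom.congr_fun h a
  · intro a
    have h : (Polynomial.eval₂RingHom (R := A) (S := A[X][X])
          ((mapRingHom (C : A →+* A[X])).comp ((expShift k i) : A →+* A[X])) (C X)).comp
          ((expShift k i) : A →+* A[X])
        = (Polynomial.eval₂RingHom (R := A) (S := A[X][X])
          ((C : A[X] →+* A[X][X]).comp (C : A →+* A[X])) (X + C X)).comp
          ((expShift k i) : A →+* A[X]) := by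
      apply MvPolynomial.ringHom_ext
      · intro r
        simp [expShift, MvPolynomial.algebraMap_eq]
      · intro j
        by_cases hj : j = i <;> simp [expShift, hj] <;> ring
    exact RingHom.congr_fun h a

theorem killVar_eq_self_of_expShift (i : Fin n) (a : A)
    (h : expShift k i a = Polynomial.C a) : killVar k i a = a := by
  have hcomp : (Polynomial.eval₂RingHom ((killVar k i) : A →+* A) (MvPolynomial.X i)).comp
      ((expShift k i) : A →+* A[X]) = RingHom.id A := by
    apply MvPolynomial.ringHom_ext
    · intro r
      simp [expShift, killVar, MvPolynomial.algebraMap_eq]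
    · intro j
      by_cases hj : j = i <;> simp [expShift, killVar, hj]
  have h1 : eval₂ ((killVar k i) : A →+* A) (MvPolynomial.X i) (expShift k i a) = a :=
    RingHom.congr_fun hcomp a
  rw [h] at h1
  simpa using h1

theorem mem_bot_of_killVar (a : A) (h : ∀ i, killVar k i a = a) :
    a ∈ (⊥ : Subalgebra k A) := by
  have key : ∀ s : Finset (Fin n),
      MvPolynomial.aeval (fun j => if j ∈ s then 0 else MvPolynomial.X j) a = a := by
    intro s
    induction s using Finset.induction with
    | empty => simpa using MvPolynomial.aeval_X_left_apply a
    | @insert i s hi ih =>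
      have := congrArg (MvPolynomial.aeval (R := k) (S₁ := MvPolynomial (Fin n) k)
        (fun j => if j ∈ s then 0 else MvPolynomial.X j)) (h i)
      rw [ih] at this
      calc (MvPolynomial.aeval fun j => if j ∈ insert i s then 0 else MvPolynomial.X j) a
          = ((MvPolynomial.aeval fun j => if j ∈ s then 0 else MvPolynomial.X j)).comp
              (killVar k i) a := by
            rw [killVar, MvPolynomial.comp_aeval]
            have hfun : (fun j => if j ∈ insert i s then (0 : A) else MvPolynomial.X j)
                = fun j => (MvPolynomial.aeval fun j => if j ∈ s then 0 else MvPolynomial.X j)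
                    (if j = i then (0 : A) else MvPolynomial.X j) := by
              funext j
              by_cases hj : j = i <;> by_cases hs : j ∈ s <;> simp [hj, hs]
            rw [hfun]
        _ = a := by rw [AlgHom.comp_apply]; exact this
  have hu := key Finset.univ
  simp only [Finset.mem_univ, if_true] at hu
  rw [show (fun _ : Fin n => (0 : A)) = (0 : Fin n → A) from rfl,
    MvPolynomial.aeval_zero] at hu
  rw [← hu]
  exact Subalgebra.algebraMap_mem _ _

end Aux

/-- For any field `k` and any natural number `n`, the AK invariant of the
polynomial ring in `n` variables over `k` is `k`. -/
theorem statement15 (k : Type*) [Field k] (n : ℕ) :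
    AK k (MvPolynomial (Fin n) k) = ⊥ := by
  refine eq_bot_iff.mpr ?_
  intro a ha
  have hmem : ∀ i : Fin n, expShift k i a = Polynomial.C a := by
    intro i
    have h1 : a ∈ expInv (expShift k i) := by
      rw [AK] at ha
      simp only [Algebra.mem_iInf] at ha
      exact ha (expShift k i) (isExpMap_expShift i)
    simpa [expInv, AlgHom.mem_equalizer, Polynomial.algebraMap_eq] using h1
  exact mem_bot_of_killVar a fun i =>
    killVar_eq_self_of_expShift i a (hmem i)
end

section
/- Let A be an integral domain of characteristic zero, φ an exponential map on A, and n, m natural numbers with n ≥ 2 and m ≥ 2. If c₁, c₂ ∈ A^φ \ {0} and a, b ∈ A are such that c₁ aⁿ + c₂ bᵐ ∈ A^φ \ {0}, then a, b ∈ A^φ. -/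
open Polynomial

open UniqueFactorizationMonoid UniqueFactorizationDomain in
lemma key_field {F : Type*} [Field F] [CharZero F] (n m : ℕ) (hn : 2 ≤ n) (hm : 2 ≤ m)
    (c₁ c₂ w : F) (hc₁ : c₁ ≠ 0) (hc₂ : c₂ ≠ 0) (hw : w ≠ 0)
    (P Q : F[X]) (heq : C c₁ * P ^ n + C c₂ * Q ^ m = C w) : P.natDegree = 0 := by
  classical
  by_contra hP0
  have hP : P ≠ 0 := fun h => hP0 (by simp [h])
  have hdP : 0 < P.natDegree := Nat.pos_of_ne_zero hP0
  set a := C c₁ * P ^ n with ha_def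
  set b := C c₂ * Q ^ m with hb_def
  have hdega : a.natDegree = n * P.natDegree := by
    rw [ha_def, natDegree_C_mul hc₁, natDegree_pow]
  have hta : 2 ≤ a.natDegree := by
    rw [hdega]
    calc 2 = 2 * 1 := by ring
    _ ≤ n * P.natDegree := Nat.mul_le_mul hn hdP
  have hQ : Q ≠ 0 := by
    intro h
    rw [h] at hb_def
    have : a = C w := by
      rw [← heq, hb_def, zero_pow (by omega), mul_zero, add_zero]
    rw [this, natDegree_C] at hta; omega
  have ha0 : a ≠ 0 := mul_ne_zero (C_ne_zero.mpr hc₁) (pow_ne_zero _ hP)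
  have hb0 : b ≠ 0 := mul_ne_zero (C_ne_zero.mpr hc₂) (pow_ne_zero _ hQ)
  have hdegb : b.natDegree = m * Q.natDegree := by
    rw [hb_def, natDegree_C_mul hc₂, natDegree_pow]
  have hab_eq : b = C w - a := by rw [← heq]; ring
  have hdb_eq : b.natDegree = a.natDegree := by
    rw [hab_eq]
    have hlt : (C w).natDegree < a.natDegree := by rw [natDegree_C]; omega
    exact natDegree_sub_eq_right_of_natDegree_lt hlt
  -- coprimality
  have hwu : IsUnit (C w : F[X]) := isUnit_C.mpr hw.isUnit
  have hcop_unit : ∀ x : F[X], IsCoprime x (C w) := by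
    intro x
    obtain ⟨u, hu⟩ := hwu
    exact ⟨0, ↑u⁻¹, by simp [← hu]⟩
  have hcop_ab : IsCoprime a b := by
    have h2 := (hcop_unit a).add_mul_left_right (-1)
    rwa [show C w + a * (-1) = b by rw [hab_eq]; ring] at h2
  have hPa : P ∣ a := Dvd.dvd.mul_left (dvd_pow_self P (by omega)) _
  have hQb : Q ∣ b := Dvd.dvd.mul_left (dvd_pow_self Q (by omega)) _
  have hcopPQ : IsCoprime P Q :=
    (hcop_ab.of_isCoprime_of_dvd_left hPa).of_isCoprime_of_dvd_right hQb
  have hsum : a + b + (-C w) = 0 := by rw [← heq]; ring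
  have hbc : IsCoprime b (-C w) := (hcop_unit b).neg_right
  have hca : IsCoprime (-C w) a := ((hcop_unit a).neg_right).symm
  have hc0 : (-C w : F[X]) ≠ 0 := neg_ne_zero.mpr (C_ne_zero.mpr hw)
  rcases Polynomial.abc ha0 hb0 hc0 hcop_ab hsum with ⟨h1, _, _⟩ | ⟨h1, _, _⟩
  · -- degree bound branch
    have hrad : (radical (a * b * -C w)).natDegree ≤ P.natDegree + Q.natDegree := by
      have huu : IsUnit (-(C c₁ * C c₂ * C w) : F[X]) :=
        (((isUnit_C.mpr hc₁.isUnit).mul (isUnit_C.mpr hc₂.isUnit)).mul hwu).neg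
      have hassoc : Associated (P ^ n * Q ^ m) (a * b * -C w) :=
        ⟨huu.unit, by rw [IsUnit.unit_spec]; rw [ha_def, hb_def]; ring⟩
      rw [← radical_eq_of_associated hassoc,
        radical_mul (hcopPQ.pow (m := n) (n := m)).isRelPrime, radical_pow P (by omega : n ≠ 0),
        radical_pow Q (by omega : m ≠ 0),
        natDegree_mul (radical_ne_zero (a := P)) (radical_ne_zero (a := Q))]
      exact add_le_add (natDegree_le_of_dvd (radical_dvd_self (a := P)) hP)
        (natDegree_le_of_dvd (radical_dvd_self (a := Q)) hQ)
    have hfin : a.natDegree + 1 ≤ P.natDegree + Q.natDegree := le_trans h1 hrad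
    have e1 : 2 * P.natDegree ≤ n * P.natDegree := Nat.mul_le_mul_right _ hn
    have e2 : 2 * Q.natDegree ≤ m * Q.natDegree := Nat.mul_le_mul_right _ hm
    have e3 : m * Q.natDegree = n * P.natDegree := by rw [← hdega, ← hdegb, hdb_eq]
    rw [hdega] at hfin
    linarith
  · have := natDegree_eq_zero_of_derivative_eq_zero h1
    omega

lemma expInv_mem_iff {k A : Type*} [CommSemiring k] [CommSemiring A] [Algebra k A]
    (φ : A →ₐ[k] A[X]) (x : A) : x ∈ expInv φ ↔ φ x = C x := by
  constructor
  · intro h; exact h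
  · intro h; exact h

/-- Let `A` be a domain of characteristic zero, `φ` an exponential map on
`A`, and `n, m ≥ 2`. If `c₁, c₂ ∈ A^φ \ {0}` and `c₁ aⁿ + c₂ bᵐ ∈ A^φ \ {0}`,
then `a, b ∈ A^φ`. -/
theorem statement17 {k A : Type*} [Field k] [CharZero k] [CommRing A] [IsDomain A]
    [CharZero A] [Algebra k A]
    (φ : A →ₐ[k] A[X]) (hφ : IsExpMap φ)
    (n m : ℕ) (hn : 2 ≤ n) (hm : 2 ≤ m)
    (c₁ c₂ : A) (hc₁ : c₁ ∈ expInv φ) (hc₁0 : c₁ ≠ 0)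
    (hc₂ : c₂ ∈ expInv φ) (hc₂0 : c₂ ≠ 0)
    (a b : A) (hab : c₁ * a ^ n + c₂ * b ^ m ∈ expInv φ)
    (hab0 : c₁ * a ^ n + c₂ * b ^ m ≠ 0) :
    a ∈ expInv φ ∧ b ∈ expInv φ := by
  obtain ⟨he0, -⟩ := hφ
  have hinv : ∀ x : A, (φ x).natDegree = 0 → x ∈ expInv φ := by
    intro x hx
    have h1 : φ x = C ((φ x).coeff 0) := eq_C_of_natDegree_eq_zero hx
    have h2 : (φ x).coeff 0 = x := by
      rw [coeff_zero_eq_eval_zero, he0]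
    rw [expInv_mem_iff, h1, h2]
  have hC1 : φ c₁ = C c₁ := hc₁
  have hC2 : φ c₂ = C c₂ := hc₂
  set w := c₁ * a ^ n + c₂ * b ^ m with hw_def
  have hCw : φ w = C w := hab
  have heq : C c₁ * (φ a) ^ n + C c₂ * (φ b) ^ m = C w := by
    rw [← hC1, ← hC2, ← map_pow, ← map_pow, ← map_mul, ← map_mul, ← map_add, hCw]
  -- pass to fraction field
  set F := FractionRing A
  have hf : Function.Injective (algebraMap A F) := IsFractionRing.injective A F
  haveI : CharZero F := charZero_of_injective_algebraMap hf
  have hmap : ∀ x y : A[X], x = y → x.map (algebraMap A F) = y.map (algebraMap A F) :=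
    fun x y h => by rw [h]
  have heqF : C (algebraMap A F c₁) * ((φ a).map (algebraMap A F)) ^ n
      + C (algebraMap A F c₂) * ((φ b).map (algebraMap A F)) ^ m = C (algebraMap A F w) := by
    have := hmap _ _ heq
    simpa [Polynomial.map_add, Polynomial.map_mul, Polynomial.map_pow, map_C] using this
  have hwF : algebraMap A F w ≠ 0 := fun h => hab0 (hf (by rw [h, map_zero]))
  have hc1F : algebraMap A F c₁ ≠ 0 := fun h => hc₁0 (hf (by rw [h, map_zero]))
  have hc2F : algebraMap A F c₂ ≠ 0 := fun h => hc₂0 (hf (by rw [h, map_zero]))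
  have hda : ((φ a).map (algebraMap A F)).natDegree = 0 :=
    key_field n m hn hm _ _ _ hc1F hc2F hwF _ _ heqF
  have hdb : ((φ b).map (algebraMap A F)).natDegree = 0 :=
    key_field m n hm hn _ _ _ hc2F hc1F hwF _ _ (by rw [add_comm]; exact heqF)
  rw [natDegree_map_eq_of_injective hf] at hda hdb
  exact ⟨hinv a hda, hinv b hdb⟩
end
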